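/- arXiv:2206.07452 — 2 statements merged into one kernel-verified Lean document; each statement's English description precedes it below -/
import Mathlib

section
/- Let (A, μ, α, β) be a regular BiHom-alternative algebra (α and β invertible). Define L^⋆, R^⋆: A → End(A*) by ⟨L^⋆(x)(ξ), y⟩ = ⟨ξ, α⁻²β(x)·α⁻¹β⁻¹(y)⟩ and ⟨R^⋆(x)(ξ), y⟩ = ⟨ξ, α⁻¹β⁻¹(y)·αβ⁻²(x)⟩ for x, y ∈ A, ξ ∈ A*. Then (A*, R^⋆, L^⋆, (α⁻¹)*, (β⁻¹)*) — the tuple whose left-action maps are R^⋆, whose right-action maps are L^⋆, and whose structure maps are the transposes (α⁻¹)* and (β⁻¹)* — is a representation of (A, μ, α, β) (the coadjoint representation). -/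
/-- The BiHom-associator `as_{α,β}(x,y,z) = (xy)β(z) − α(x)(yz)`. -/
def biAssoc {A : Type*} [AddCommGroup A] (mul : A → A → A) (α β : A → A)
    (x y z : A) : A :=
  mul (mul x y) (β z) - mul (α x) (mul y z)

/-- A BiHom-algebra `(A, μ, α, β)`. -/
structure IsBiHomAlg (K : Type*) {A : Type*} [Field K] [AddCommGroup A] [Module K A]
    (mul : A → A → A) (α β : A → A) : Prop where
  mul_lin_left : ∀ y, IsLinearMap K fun x => mul x y
  mul_lin_right : ∀ x, IsLinearMap K (mul x)
  alpha_lin : IsLinearMap K α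
  beta_lin : IsLinearMap K β
  alpha_beta_comm : ∀ x, α (β x) = β (α x)
  alpha_mul : ∀ x y, α (mul x y) = mul (α x) (α y)
  beta_mul : ∀ x y, β (mul x y) = mul (β x) (β y)

/-- A BiHom-alternative algebra. -/
structure IsBiHomAlt (K : Type*) {A : Type*} [Field K] [AddCommGroup A] [Module K A]
    (mul : A → A → A) (α β : A → A) extends IsBiHomAlg K mul α β : Prop where
  left_alt : ∀ x y z,
    biAssoc mul α β (β x) (α y) z + biAssoc mul α β (β y) (α x) z = 0
  right_alt : ∀ x y z,
    biAssoc mul α β x (β y) (α z) + biAssoc mul α β x (β z) (α y) = 0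

/-- A representation (bimodule) `(V, ℓ, r, φ, ψ)` of a BiHom-alternative algebra. -/
structure IsBiHomRep (K : Type*) {A V : Type*} [Field K] [AddCommGroup A] [Module K A]
    [AddCommGroup V] [Module K V] (mul : A → A → A) (α β : A → A)
    (l r : A → Module.End K V) (φ ψ : Module.End K V) : Prop where
  l_lin : IsLinearMap K l
  r_lin : IsLinearMap K r
  phi_psi_comm : ∀ v, φ (ψ v) = ψ (φ v)
  phi_l : ∀ x v, φ (l x v) = l (α x) (φ v)
  phi_r : ∀ x v, φ (r x v) = r (α x) (φ v)
  psi_l : ∀ x v, ψ (l x v) = l (β x) (ψ v)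
  psi_r : ∀ x v, ψ (r x v) = r (β x) (ψ v)
  rep1 : ∀ x v, l (mul (β x) (α x)) (ψ v) = l (α (β x)) (l (α x) v)
  rep2 : ∀ x v, r (mul (β x) (α x)) (φ v) = r (α (β x)) (r (β x) v)
  rep3 : ∀ x y v, r (β y) (l (β x) (φ v)) - l (α (β x)) (r y (φ v))
      = r (mul (α x) y) (φ (ψ v)) - r (β y) (r (α x) (ψ v))
  rep4 : ∀ x y v, l (α y) (r (α x) (ψ v)) - r (α (β x)) (l y (ψ v))
      = l (mul y (β x)) (φ (ψ v)) - l (α y) (l (β x) (φ v))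

/-!
After pairing with a vector of `A`, each representation axiom for the coadjoint maps becomes an
identity between values of `ξ` at products in `A`, once `α`, `β` and their inverses are pushed
inside the products. The axioms involving a single map are identities of commuting algebra
automorphisms. The two quadratic axioms are instances of `as(βx, αx, z) = 0` and
`as(x, βz, αz) = 0`, obtained from the alternativity identities by halving. The two mixed axioms
are both instances of the cyclic symmetry `as(β²u, βαv, α²w) = as(β²w, βαu, α²v)` of the
BiHom-associator, which follows from its two skew-symmetries.
-/

theorem eq_zero_of_add_self_eq_zero (K : Type*) {A : Type*} [Field K] [CharZero K]
    [AddCommGroup A] [Module K A] {a : A} (h : a + a = 0) : a = 0 := by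
  rwa [← two_smul K, smul_eq_zero, or_iff_right (two_ne_zero' K)] at h

namespace IsBiHomAlg

variable {K A : Type*} [Field K] [AddCommGroup A] [Module K A] {mul : A → A → A}
  {α β : A ≃ₗ[K] A} (halg : IsBiHomAlg K mul α β)
include halg

theorem apply_symm_comm (x : A) : α (β.symm x) = β.symm (α x) :=
  β.injective <| by rw [β.apply_symm_apply, ← halg.alpha_beta_comm, β.apply_symm_apply]

theorem symm_apply_comm (x : A) : α.symm (β x) = β (α.symm x) :=
  α.injective <| by rw [α.apply_symm_apply, halg.alpha_beta_comm, α.apply_symm_apply]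

theorem symm_symm_comm (x : A) : α.symm (β.symm x) = β.symm (α.symm x) :=
  α.injective <| by rw [α.apply_symm_apply, halg.apply_symm_comm, α.apply_symm_apply]

theorem alpha_symm_mul (x y : A) : α.symm (mul x y) = mul (α.symm x) (α.symm y) :=
  α.injective <| by simp only [α.apply_symm_apply, halg.alpha_mul]

theorem beta_symm_mul (x y : A) : β.symm (mul x y) = mul (β.symm x) (β.symm y) :=
  β.injective <| by simp only [β.apply_symm_apply, halg.beta_mul]

theorem dualMap_symm_comm (ξ : Module.Dual K A) :
    α.symm.toLinearMap.dualMap (β.symm.toLinearMap.dualMap ξ) =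
      β.symm.toLinearMap.dualMap (α.symm.toLinearMap.dualMap ξ) := by
  ext z
  simp [halg.symm_symm_comm]

/-- `L^⋆` -/
def coadjointLeft (x : A) : Module.End K (Module.Dual K A) :=
  ((IsLinearMap.mk' (mul (α.symm (α.symm (β x)))) (halg.mul_lin_right _)) ∘ₗ
    (α.symm.toLinearMap ∘ₗ β.symm.toLinearMap)).dualMap

/-- `R^⋆` -/
def coadjointRight (x : A) : Module.End K (Module.Dual K A) :=
  ((IsLinearMap.mk' (fun z => mul z (α (β.symm (β.symm x)))) (halg.mul_lin_left _)) ∘ₗ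
    (α.symm.toLinearMap ∘ₗ β.symm.toLinearMap)).dualMap

@[simp]
theorem coadjointLeft_apply (x : A) (ξ : Module.Dual K A) (y : A) :
    halg.coadjointLeft x ξ y = ξ (mul (α.symm (α.symm (β x))) (α.symm (β.symm y))) :=
  rfl

@[simp]
theorem coadjointRight_apply (x : A) (ξ : Module.Dual K A) (y : A) :
    halg.coadjointRight x ξ y = ξ (mul (α.symm (β.symm y)) (α (β.symm (β.symm x)))) :=
  rfl

theorem isLinearMap_coadjointLeft : IsLinearMap K halg.coadjointLeft := by
  refine ⟨fun x y => ?_, fun c x => ?_⟩ <;> ext ξ z <;>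
    simp [(halg.mul_lin_left _).map_add, (halg.mul_lin_left _).map_smul]

theorem isLinearMap_coadjointRight : IsLinearMap K halg.coadjointRight := by
  refine ⟨fun x y => ?_, fun c x => ?_⟩ <;> ext ξ z <;>
    simp [(halg.mul_lin_right _).map_add, (halg.mul_lin_right _).map_smul]

theorem coadjointLeft_alpha_comm (x : A) (ξ : Module.Dual K A) :
    α.symm.toLinearMap.dualMap (halg.coadjointLeft x ξ) =
      halg.coadjointLeft (α x) (α.symm.toLinearMap.dualMap ξ) := by
  ext z
  simp [halg.alpha_symm_mul, halg.symm_symm_comm, halg.symm_apply_comm]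

theorem coadjointLeft_beta_comm (x : A) (ξ : Module.Dual K A) :
    β.symm.toLinearMap.dualMap (halg.coadjointLeft x ξ) =
      halg.coadjointLeft (β x) (β.symm.toLinearMap.dualMap ξ) := by
  ext z
  simp [halg.beta_symm_mul, halg.symm_symm_comm, halg.symm_apply_comm]

theorem coadjointRight_alpha_comm (x : A) (ξ : Module.Dual K A) :
    α.symm.toLinearMap.dualMap (halg.coadjointRight x ξ) =
      halg.coadjointRight (α x) (α.symm.toLinearMap.dualMap ξ) := by
  ext z
  simp [halg.alpha_symm_mul, halg.symm_symm_comm, halg.apply_symm_comm]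

theorem coadjointRight_beta_comm (x : A) (ξ : Module.Dual K A) :
    β.symm.toLinearMap.dualMap (halg.coadjointRight x ξ) =
      halg.coadjointRight (β x) (β.symm.toLinearMap.dualMap ξ) := by
  ext z
  simp [halg.beta_symm_mul, halg.symm_symm_comm, halg.apply_symm_comm]

end IsBiHomAlg

namespace IsBiHomAlt

variable {K A : Type*} [Field K] [AddCommGroup A] [Module K A] {mul : A → A → A}

section

variable {α β : A → A} (halg : IsBiHomAlt K mul α β)
include halg

theorem biAssoc_beta_alpha_self [CharZero K] (x z : A) :
    biAssoc mul α β (β x) (α x) z = 0 :=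
  eq_zero_of_add_self_eq_zero K (halg.left_alt x x z)

theorem biAssoc_self_beta_alpha [CharZero K] (x z : A) :
    biAssoc mul α β x (β z) (α z) = 0 :=
  eq_zero_of_add_self_eq_zero K (halg.right_alt x z z)

theorem biAssoc_cycle (u v w : A) :
    biAssoc mul α β (β (β u)) (β (α v)) (α (α w)) =
      biAssoc mul α β (β (β w)) (β (α u)) (α (α v)) := by
  rw [eq_neg_of_add_eq_zero_left (halg.right_alt _ (α v) (α w)), ← halg.alpha_beta_comm w,
    eq_neg_of_add_eq_zero_left (halg.left_alt (β u) (β w) _), neg_neg, halg.alpha_beta_comm]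

end

variable {α β : A ≃ₗ[K] A} (halg : IsBiHomAlt K mul α β)

theorem coadjointRight_beta_mul_alpha [CharZero K] (x : A) (ξ : Module.Dual K A) :
    halg.coadjointRight (mul (β x) (α x)) (β.symm.toLinearMap.dualMap ξ) =
      halg.coadjointRight (α (β x)) (halg.coadjointRight (α x) ξ) := by
  ext z
  symm
  simpa [biAssoc, sub_eq_zero, halg.alpha_mul, halg.beta_mul, halg.alpha_symm_mul,
    halg.beta_symm_mul, halg.alpha_beta_comm, halg.apply_symm_comm, halg.symm_apply_comm,
    halg.symm_symm_comm]
    using congrArg ξ (halg.biAssoc_self_beta_alpha (α.symm (α.symm (β.symm (β.symm z))))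
      (α (β.symm (β.symm (β.symm x)))))

theorem coadjointLeft_beta_mul_alpha [CharZero K] (x : A) (ξ : Module.Dual K A) :
    halg.coadjointLeft (mul (β x) (α x)) (α.symm.toLinearMap.dualMap ξ) =
      halg.coadjointLeft (α (β x)) (halg.coadjointLeft (β x) ξ) := by
  ext z
  simpa [biAssoc, sub_eq_zero, halg.alpha_mul, halg.beta_mul, halg.alpha_symm_mul,
    halg.beta_symm_mul, halg.alpha_beta_comm, halg.apply_symm_comm, halg.symm_apply_comm,
    halg.symm_symm_comm]
    using congrArg ξ (halg.biAssoc_beta_alpha_self (α.symm (α.symm (α.symm (β x))))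
      (α.symm (α.symm (β.symm (β.symm z)))))

theorem coadjointLeft_mul_alpha (x y : A) (ξ : Module.Dual K A) :
    halg.coadjointLeft (β y) (halg.coadjointRight (β x) (α.symm.toLinearMap.dualMap ξ)) -
        halg.coadjointRight (α (β x)) (halg.coadjointLeft y (α.symm.toLinearMap.dualMap ξ)) =
      halg.coadjointLeft (mul (α x) y)
          (α.symm.toLinearMap.dualMap (β.symm.toLinearMap.dualMap ξ)) -
        halg.coadjointLeft (β y) (halg.coadjointLeft (α x) (β.symm.toLinearMap.dualMap ξ)) := by
  ext z
  simpa [biAssoc, halg.beta_mul, halg.alpha_symm_mul, halg.beta_symm_mul,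
    halg.alpha_beta_comm, halg.apply_symm_comm, halg.symm_apply_comm, halg.symm_symm_comm]
    using congrArg ξ (halg.biAssoc_cycle (α.symm (α.symm (α.symm (α.symm (β.symm y)))))
      (α.symm (α.symm (α.symm (α.symm (β.symm (β.symm (β.symm z)))))))
      (α.symm (α.symm (β.symm (β.symm x)))))

theorem coadjointRight_mul_beta (x y : A) (ξ : Module.Dual K A) :
    halg.coadjointRight (α y) (halg.coadjointLeft (α x) (β.symm.toLinearMap.dualMap ξ)) -
        halg.coadjointLeft (α (β x)) (halg.coadjointRight y (β.symm.toLinearMap.dualMap ξ)) =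
      halg.coadjointRight (mul y (β x))
          (α.symm.toLinearMap.dualMap (β.symm.toLinearMap.dualMap ξ)) -
        halg.coadjointRight (α y) (halg.coadjointRight (β x) (α.symm.toLinearMap.dualMap ξ)) := by
  ext z
  have h := congrArg ξ (halg.biAssoc_cycle
    (α.symm (α.symm (α.symm (β.symm (β.symm (β.symm (β.symm z)))))))
    (α.symm (β.symm (β.symm (β.symm (β.symm y))))) (α.symm (α.symm (β.symm (β.symm x)))))
  simp only [biAssoc, map_sub, LinearMap.sub_apply, LinearMap.dualMap_apply,
    LinearEquiv.coe_coe, IsBiHomAlg.coadjointLeft_apply, IsBiHomAlg.coadjointRight_apply,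
    halg.alpha_mul, halg.alpha_symm_mul, halg.beta_symm_mul, halg.alpha_beta_comm,
    halg.apply_symm_comm, halg.symm_apply_comm, halg.symm_symm_comm,
    LinearEquiv.apply_symm_apply, LinearEquiv.symm_apply_apply] at h ⊢
  linear_combination h

end IsBiHomAlt

/-- The coadjoint representation: for a regular BiHom-alternative algebra
`(A, μ, α, β)`, the tuple `(A*, R^⋆, L^⋆, (α⁻¹)*, (β⁻¹)*)` is a representation
of `(A, μ, α, β)`, where `⟨L^⋆(x)(ξ), y⟩ = ⟨ξ, α⁻²β(x)·α⁻¹β⁻¹(y)⟩` and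
`⟨R^⋆(x)(ξ), y⟩ = ⟨ξ, α⁻¹β⁻¹(y)·αβ⁻²(x)⟩`. -/
theorem coadjoint_isBiHomRep
    (K : Type*) [Field K] [CharZero K] {A : Type*} [AddCommGroup A] [Module K A]
    (mul : A → A → A) (α β : A ≃ₗ[K] A) (halg : IsBiHomAlt K mul (⇑α) (⇑β)) :
    IsBiHomRep K mul (⇑α) (⇑β)
      -- left-action maps: R^⋆
      (fun x => ((IsLinearMap.mk' (fun z => mul z (α (β.symm (β.symm x))))
          (halg.mul_lin_left (α (β.symm (β.symm x))))) ∘ₗ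
            (α.symm.toLinearMap ∘ₗ β.symm.toLinearMap)).dualMap)
      -- right-action maps: L^⋆
      (fun x => ((IsLinearMap.mk' (mul (α.symm (α.symm (β x))))
          (halg.mul_lin_right (α.symm (α.symm (β x))))) ∘ₗ
            (α.symm.toLinearMap ∘ₗ β.symm.toLinearMap)).dualMap)
      α.symm.toLinearMap.dualMap β.symm.toLinearMap.dualMap :=
  { l_lin := halg.isLinearMap_coadjointRight
    r_lin := halg.isLinearMap_coadjointLeft
    phi_psi_comm := halg.dualMap_symm_comm
    phi_l := halg.coadjointRight_alpha_comm
    phi_r := halg.coadjointLeft_alpha_comm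
    psi_l := halg.coadjointRight_beta_comm
    psi_r := halg.coadjointLeft_beta_comm
    rep1 := halg.coadjointRight_beta_mul_alpha
    rep2 := halg.coadjointLeft_beta_mul_alpha
    rep3 := halg.coadjointLeft_mul_alpha
    rep4 := halg.coadjointRight_mul_beta }
end

section
/- Let (A, μ, α, β) be a BiHom-alternative algebra, k, l, s, t ∈ ℕ, θ an α^kβ^l-quasi-centroid and θ' an α^sβ^t-quasi-centroid of A. Then the commutator [θ,θ'] = θ∘θ' − θ'∘θ is an α^{k+s}β^{l+t}-quasi-derivation of A; explicitly, [θ,θ'] commutes with α and β and satisfies [θ,θ'](x)·α^{k+s}β^{l+t}(y) + α^{k+s}β^{l+t}(x)·[θ,θ'](y) = 0 for all x, y ∈ A (so D' = 0 works). -/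
/-- An `α^k β^l`-derivation of `(A, μ, α, β)`. -/
structure IsDerivation (K : Type*) {A : Type*} [Field K] [AddCommGroup A] [Module K A]
    (mul : A → A → A) (α β : A → A) (k l : ℕ) (D : A → A) : Prop where
  lin : IsLinearMap K D
  comm_a : ∀ x, D (α x) = α (D x)
  comm_b : ∀ x, D (β x) = β (D x)
  der : ∀ x y, D (mul x y)
      = mul (D x) (α^[k] (β^[l] y)) + mul (α^[k] (β^[l] x)) (D y)

/-- An `α^k β^l`-centroid of `(A, μ, α, β)`. -/
structure IsCentroid (K : Type*) {A : Type*} [Field K] [AddCommGroup A] [Module K A]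
    (mul : A → A → A) (α β : A → A) (k l : ℕ) (θ : A → A) : Prop where
  lin : IsLinearMap K θ
  comm_a : ∀ x, θ (α x) = α (θ x)
  comm_b : ∀ x, θ (β x) = β (θ x)
  cent_l : ∀ x y, θ (mul x y) = mul (θ x) (α^[k] (β^[l] y))
  cent_r : ∀ x y, θ (mul x y) = mul (α^[k] (β^[l] x)) (θ y)

/-- An `α^k β^l`-quasi-centroid of `(A, μ, α, β)`. -/
structure IsQuasiCentroid (K : Type*) {A : Type*} [Field K] [AddCommGroup A] [Module K A]
    (mul : A → A → A) (α β : A → A) (k l : ℕ) (θ : A → A) : Prop where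
  lin : IsLinearMap K θ
  comm_a : ∀ x, θ (α x) = α (θ x)
  comm_b : ∀ x, θ (β x) = β (θ x)
  qc : ∀ x y, mul (θ x) (α^[k] (β^[l] y)) = mul (α^[k] (β^[l] x)) (θ y)

/-- An `α^k β^l`-quasi-derivation of `(A, μ, α, β)`. -/
def IsQuasiDerivation (K : Type*) {A : Type*} [Field K] [AddCommGroup A] [Module K A]
    (mul : A → A → A) (α β : A → A) (k l : ℕ) (D : A → A) : Prop :=
  IsLinearMap K D ∧ (∀ x, D (α x) = α (D x)) ∧ (∀ x, D (β x) = β (D x)) ∧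
    ∃ D' : A → A, IsLinearMap K D' ∧ (∀ x, D' (α x) = α (D' x)) ∧
      (∀ x, D' (β x) = β (D' x)) ∧
      ∀ x y, D' (mul x y)
        = mul (D x) (α^[k] (β^[l] y)) + mul (α^[k] (β^[l] x)) (D y)

/-- An `α^k β^l`-generalized derivation of `(A, μ, α, β)` with associated maps
`D'` and `D''`. -/
structure IsGenDerivation (K : Type*) {A : Type*} [Field K] [AddCommGroup A] [Module K A]
    (mul : A → A → A) (α β : A → A) (k l : ℕ) (D D' D'' : A → A) : Prop where
  lin : IsLinearMap K D
  lin' : IsLinearMap K D'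
  lin'' : IsLinearMap K D''
  comm_a : ∀ x, D (α x) = α (D x)
  comm_b : ∀ x, D (β x) = β (D x)
  comm_a' : ∀ x, D' (α x) = α (D' x)
  comm_b' : ∀ x, D' (β x) = β (D' x)
  comm_a'' : ∀ x, D'' (α x) = α (D'' x)
  comm_b'' : ∀ x, D'' (β x) = β (D'' x)
  gen : ∀ x y, D'' (mul x y)
      = mul (D x) (α^[k] (β^[l] y)) + mul (α^[k] (β^[l] x)) (D' y)

/-!
Write `M = α^{k+s}β^{l+t}`. Splitting `M = α^kβ^l ∘ α^sβ^t`, commuting `θ`, `θ'` past the twists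
and applying the quasi-centroid identity of `θ` and then that of `θ'` gives
`θθ'(x)·M(y) = M(x)·θ'θ(y)`, and symmetrically `θ'θ(x)·M(y) = M(x)·θθ'(y)`. Subtracting, the
commutator satisfies `[θ,θ'](x)·M(y) + M(x)·[θ,θ'](y) = 0`, so it is a quasi-derivation with `D' = 0`.
-/

theorem iterate_add_iterate_add_apply {X : Type*} {f g : X → X} (h : Function.Commute f g)
    (k l s t : ℕ) (y : X) :
    f^[k + s] (g^[l + t] y) = f^[k] (g^[l] (f^[s] (g^[t] y))) := by
  rw [Function.iterate_add_apply, Function.iterate_add_apply,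
    (h.iterate_iterate s l).eq]

section QuasiCentroid

variable {K : Type*} [Field K] {A : Type*} [AddCommGroup A] [Module K A]
  {mul : A → A → A} {α β : A → A}

theorem IsQuasiCentroid.map_iterate_iterate {k l : ℕ} {θ : A → A}
    (hθ : IsQuasiCentroid K mul α β k l θ) (m n : ℕ) (x : A) :
    θ (α^[m] (β^[n] x)) = α^[m] (β^[n] (θ x)) := by
  rw [(Function.Commute.iterate_right hθ.comm_a m).eq,
    (Function.Commute.iterate_right hθ.comm_b n).eq]

theorem IsQuasiCentroid.mul_comp_eq_mul_comp (hαβ : Function.Commute α β)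
    {k l s t : ℕ} {θ θ' : A → A}
    (hθ : IsQuasiCentroid K mul α β k l θ) (hθ' : IsQuasiCentroid K mul α β s t θ') (x y : A) :
    mul (θ (θ' x)) (α^[k + s] (β^[l + t] y)) = mul (α^[k + s] (β^[l + t] x)) (θ' (θ y)) := by
  rw [iterate_add_iterate_add_apply hαβ, hθ.qc, hθ.map_iterate_iterate,
    ← hθ'.map_iterate_iterate, hθ'.qc, add_comm k s, add_comm l t,
    iterate_add_iterate_add_apply hαβ]

theorem IsBiHomAlg.commutator_mul_add_mul_eq_zero (halg : IsBiHomAlg K mul α β)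
    {k l s t : ℕ} {θ θ' : A → A}
    (hθ : IsQuasiCentroid K mul α β k l θ) (hθ' : IsQuasiCentroid K mul α β s t θ') (x y : A) :
    mul (θ (θ' x) - θ' (θ x)) (α^[k + s] (β^[l + t] y))
      + mul (α^[k + s] (β^[l + t] x)) (θ (θ' y) - θ' (θ y)) = 0 := by
  have hαβ : Function.Commute α β := halg.alpha_beta_comm
  rw [(halg.mul_lin_left _).map_sub, (halg.mul_lin_right _).map_sub,
    hθ.mul_comp_eq_mul_comp hαβ hθ', add_comm k s, add_comm l t,
    hθ'.mul_comp_eq_mul_comp hαβ hθ]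
  abel

theorem isLinearMap_commutator {θ θ' : A → A} (hθ : IsLinearMap K θ) (hθ' : IsLinearMap K θ') :
    IsLinearMap K fun x => θ (θ' x) - θ' (θ x) :=
  ((hθ.mk' θ).comp (hθ'.mk' θ') - (hθ'.mk' θ').comp (hθ.mk' θ)).isLinear

theorem commute_commutator {f θ θ' : A → A} (hf : IsLinearMap K f)
    (hθ : Function.Commute θ f) (hθ' : Function.Commute θ' f) (x : A) :
    θ (θ' (f x)) - θ' (θ (f x)) = f (θ (θ' x) - θ' (θ x)) := by
  rw [hθ'.eq, hθ.eq, hθ.eq, hθ'.eq, hf.map_sub]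

theorem IsBiHomAlg.isQuasiDerivation_of_mul_add_mul_eq_zero (halg : IsBiHomAlg K mul α β)
    {k l : ℕ} {D : A → A} (hD : IsLinearMap K D) (hα : Function.Commute D α)
    (hβ : Function.Commute D β)
    (h : ∀ x y, mul (D x) (α^[k] (β^[l] y)) + mul (α^[k] (β^[l] x)) (D y) = 0) :
    IsQuasiDerivation K mul α β k l D :=
  ⟨hD, hα, hβ, 0, (0 : A →ₗ[K] A).isLinear, fun _ => halg.alpha_lin.map_zero.symm,
    fun _ => halg.beta_lin.map_zero.symm, fun x y => (h x y).symm⟩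

end QuasiCentroid

theorem commutator_quasiCentroids_isQuasiDerivation_general
    (K : Type*) [Field K] {A : Type*} [AddCommGroup A] [Module K A]
    (mul : A → A → A) (α β : A → A) (halg : IsBiHomAlt K mul α β)
    (k l s t : ℕ) (θ θ' : A → A)
    (hθ : IsQuasiCentroid K mul α β k l θ) (hθ' : IsQuasiCentroid K mul α β s t θ') :
    IsQuasiDerivation K mul α β (k + s) (l + t) (fun x => θ (θ' x) - θ' (θ x)) ∧
    (∀ x, (θ (θ' (α x)) - θ' (θ (α x))) = α (θ (θ' x) - θ' (θ x))) ∧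
    (∀ x, (θ (θ' (β x)) - θ' (θ (β x))) = β (θ (θ' x) - θ' (θ x))) ∧
    (∀ x y, mul (θ (θ' x) - θ' (θ x)) (α^[k + s] (β^[l + t] y))
        + mul (α^[k + s] (β^[l + t] x)) (θ (θ' y) - θ' (θ y)) = 0) := by
  have hα := commute_commutator halg.alpha_lin hθ.comm_a hθ'.comm_a
  have hβ := commute_commutator halg.beta_lin hθ.comm_b hθ'.comm_b
  have hzero := halg.commutator_mul_add_mul_eq_zero hθ hθ'
  exact ⟨halg.isQuasiDerivation_of_mul_add_mul_eq_zero (isLinearMap_commutator hθ.lin hθ'.lin)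
    hα hβ hzero, hα, hβ, hzero⟩

/-- If `θ` is an `α^k β^l`-quasi-centroid and `θ'` an `α^s β^t`-quasi-centroid
of a BiHom-alternative algebra, then `[θ,θ'] = θ∘θ' − θ'∘θ` is an
`α^{k+s} β^{l+t}`-quasi-derivation; explicitly
`[θ,θ'](x)·α^{k+s}β^{l+t}(y) + α^{k+s}β^{l+t}(x)·[θ,θ'](y) = 0`. -/
theorem commutator_quasiCentroids_isQuasiDerivation
    (K : Type*) [Field K] [CharZero K] {A : Type*} [AddCommGroup A] [Module K A]
    (mul : A → A → A) (α β : A → A) (halg : IsBiHomAlt K mul α β)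
    (k l s t : ℕ) (θ θ' : A → A)
    (hθ : IsQuasiCentroid K mul α β k l θ) (hθ' : IsQuasiCentroid K mul α β s t θ') :
    IsQuasiDerivation K mul α β (k + s) (l + t) (fun x => θ (θ' x) - θ' (θ x)) ∧
    (∀ x, (θ (θ' (α x)) - θ' (θ (α x))) = α (θ (θ' x) - θ' (θ x))) ∧
    (∀ x, (θ (θ' (β x)) - θ' (θ (β x))) = β (θ (θ' x) - θ' (θ x))) ∧
    (∀ x y, mul (θ (θ' x) - θ' (θ x)) (α^[k + s] (β^[l + t] y))
        + mul (α^[k + s] (β^[l + t] x)) (θ (θ' y) - θ' (θ y)) = 0) :=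
  commutator_quasiCentroids_isQuasiDerivation_general K mul α β halg k l s t θ θ' hθ hθ'
end
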